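/- arXiv:1807.04788 — 3 statements merged into one kernel-verified Lean document; each statement's English description precedes it below -/
import Mathlib

section
/- In the SI model with acute/chronic stages and treatment, the controlled reproduction number R₀(u) = [(α_C β + α_A μ_C)(δ + μ_T) + (α_T β + α_A μ_T)u] / [(β + μ_A)(δ μ_C + μ_C μ_T + μ_T u)] satisfies R₀(u) − R₀(0) = −β u (α_C μ_T − α_T μ_C) / [μ_C (β + μ_A)(δ μ_C + μ_C μ_T + μ_T u)], and hence R₀(u) < R₀(0) for every u > 0 if and only if α_C/μ_C > α_T/μ_T. -/
/-- SI model with treatment: the controlled reproduction number satisfies the stated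
difference identity, and R₀(u) < R₀(0) for every u > 0 iff α_C/μ_C > α_T/μ_T. -/
theorem stmt11 (αA αC αT β δ μA μC μT : ℝ)
    (hαA : 0 ≤ αA) (hαC : 0 ≤ αC) (hαT : 0 ≤ αT)
    (hβ : 0 < β) (hδ : 0 < δ) (hμA : 0 < μA) (hμC : 0 < μC) (hμT : 0 < μT)
    (R₀ : ℝ → ℝ)
    (hR₀ : ∀ u, R₀ u = ((αC * β + αA * μC) * (δ + μT) + (αT * β + αA * μT) * u) /
        ((β + μA) * (δ * μC + μC * μT + μT * u))) :
    (∀ u, 0 < u →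
        R₀ u - R₀ 0 =
          -(β * u * (αC * μT - αT * μC)) /
            (μC * (β + μA) * (δ * μC + μC * μT + μT * u))) ∧
      ((∀ u, 0 < u → R₀ u < R₀ 0) ↔ αC / μC > αT / μT) := by
  have hβμA : (0:ℝ) < β + μA := by linarith
  have key : ∀ u : ℝ, 0 < u →
      R₀ u - R₀ 0 =
        -(β * u * (αC * μT - αT * μC)) /
          (μC * (β + μA) * (δ * μC + μC * μT + μT * u)) := by
    intro u hu
    have hd : (0:ℝ) < δ * μC + μC * μT + μT * u := by positivity
    have hd0 : (0:ℝ) < δ * μC + μC * μT + μT * 0 := by positivity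
    rw [hR₀ u, hR₀ 0]
    field_simp
    ring
  refine ⟨key, ?_⟩
  constructor
  · intro h
    have h1 := key 1 one_pos
    have hlt : R₀ 1 - R₀ 0 < 0 := by linarith [h 1 one_pos]
    rw [h1] at hlt
    have hd : (0:ℝ) < μC * (β + μA) * (δ * μC + μC * μT + μT * 1) := by positivity
    have hnum : 0 < β * 1 * (αC * μT - αT * μC) := by
      by_contra hcon
      push_neg at hcon
      have : 0 ≤ -(β * 1 * (αC * μT - αT * μC)) / (μC * (β + μA) * (δ * μC + μC * μT + μT * 1)) :=
        div_nonneg (by linarith) hd.le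
      linarith
    have : αT * μC < αC * μT := by nlinarith
    rw [gt_iff_lt, div_lt_div_iff₀ hμT hμC]
    linarith
  · intro h u hu
    rw [gt_iff_lt, div_lt_div_iff₀ hμT hμC] at h
    have hd : (0:ℝ) < μC * (β + μA) * (δ * μC + μC * μT + μT * u) := by positivity
    have : R₀ u - R₀ 0 < 0 := by
      rw [key u hu]
      apply div_neg_of_neg_of_pos _ hd
      nlinarith [mul_pos (mul_pos hβ hu) (sub_pos.mpr h)]
    linarith
end

section
/- For the SEIR model with asymptomatic stage, the expression R₁ = −η p₁ [α_I(γ_A+μ)(γ_T+μ) + (α_I(γ_A+μ) − α_A(γ_I+μ))(1−p₂)x] / [(η+μ)(γ_A+μ)(γ_I+μ)²(γ_T+μ+x)] is negative if and only if ζ_I + (ζ_I − ζ_A)·x(1−p₂)/(γ_T+μ) > 0, where ζ_A = α_A/(γ_A+μ) and ζ_I = α_I/(γ_I+μ); in particular R₁ < 0 whenever ζ_I ≥ ζ_A and α_I > 0. -/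
/-- SEIR model with asymptomatic stage: R₁ is negative iff
ζ_I + (ζ_I − ζ_A)·x(1−p₂)/(γ_T+μ) > 0, where ζ_A = α_A/(γ_A+μ), ζ_I = α_I/(γ_I+μ);
in particular R₁ < 0 whenever ζ_I ≥ ζ_A and α_I > 0. -/
theorem stmt13 (η γA γI γT μ x αA αI p₁ p₂ : ℝ)
    (hη : 0 < η) (hγA : 0 < γA) (hγI : 0 < γI) (hγT : 0 < γT) (hμ : 0 < μ)
    (hx : 0 < x) (hαA : 0 ≤ αA) (hαI : 0 ≤ αI)
    (hp₁ : 0 < p₁) (hp₁' : p₁ ≤ 1) (hp₂ : 0 ≤ p₂) (hp₂' : p₂ ≤ 1)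
    (R₁ ζA ζI : ℝ)
    (hR₁ : R₁ = -(η * p₁ * (αI * (γA + μ) * (γT + μ) +
        (αI * (γA + μ) - αA * (γI + μ)) * (1 - p₂) * x)) /
        ((η + μ) * (γA + μ) * (γI + μ) ^ 2 * (γT + μ + x)))
    (hζA : ζA = αA / (γA + μ)) (hζI : ζI = αI / (γI + μ)) :
    (R₁ < 0 ↔ 0 < ζI + (ζI - ζA) * (x * (1 - p₂)) / (γT + μ)) ∧
      (ζA ≤ ζI → 0 < αI → R₁ < 0) := by
  have hA : (0:ℝ) < γA + μ := by linarith
  have hI : (0:ℝ) < γI + μ := by linarith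
  have hT : (0:ℝ) < γT + μ := by linarith
  have hTx : (0:ℝ) < γT + μ + x := by linarith
  have hD : (0:ℝ) < (η + μ) * (γA + μ) * (γI + μ) ^ 2 * (γT + μ + x) := by positivity
  set N := αI * (γA + μ) * (γT + μ) + (αI * (γA + μ) - αA * (γI + μ)) * (1 - p₂) * x with hN
  have key : ζI + (ζI - ζA) * (x * (1 - p₂)) / (γT + μ)
      = N / ((γA + μ) * (γI + μ) * (γT + μ)) := by
    subst hζA hζI
    field_simp
    ring
  have hRN : R₁ < 0 ↔ 0 < N := by
    rw [hR₁, neg_div, neg_lt_zero, div_pos_iff]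
    constructor
    · rintro (⟨h1, _⟩ | ⟨_, h2⟩)
      · nlinarith [mul_pos hη hp₁]
      · linarith
    · intro h
      exact Or.inl ⟨by positivity, hD⟩
  have hiff : R₁ < 0 ↔ 0 < ζI + (ζI - ζA) * (x * (1 - p₂)) / (γT + μ) := by
    rw [key, hRN]
    constructor
    · intro h; positivity
    · intro h
      by_contra hc
      push_neg at hc
      have : N / ((γA + μ) * (γI + μ) * (γT + μ)) ≤ 0 :=
        div_nonpos_of_nonpos_of_nonneg hc (by positivity)
      linarith
  refine ⟨hiff, fun hle hαI' => ?_⟩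
  rw [hRN]
  rw [hζA, hζI, div_le_div_iff₀ hA hI] at hle
  nlinarith [mul_pos hαI' hA, mul_pos (mul_pos hαI' hA) hT,
    mul_nonneg (mul_nonneg (sub_nonneg.mpr hle) (sub_nonneg.mpr hp₂')) hx.le]
end

section
/- In the SEIR model with asymptomatic stage, for every u > 0 the difference R₀(u) − R₀(0) = −η p₁ u [α_I(γ_A+μ)(γ_T+μ) + (α_I(γ_A+μ) − α_A(γ_I+μ))(1−p₂)x] / [(η+μ)(γ_A+μ)(γ_I+μ)((γ_I+μ)(γ_T+μ+x) + (γ_T+μ+x(1−p₂))u)] has the same sign as R₁ (the u-coefficient); hence if the numerator bracket α_I(γ_A+μ)(γ_T+μ) + (α_I(γ_A+μ) − α_A(γ_I+μ))(1−p₂)x is positive, then R₀(u) < R₀(0) for all u > 0. -/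
lemma sign_aux (c D N : ℝ) (hc : 0 < c) (hD : 0 < D) :
    (-(c * N) / D < 0 ↔ 0 < N) ∧ (0 < -(c * N) / D ↔ N < 0) ∧
      (-(c * N) / D = 0 ↔ N = 0) := by
  have hD' : D ≠ 0 := hD.ne'
  refine ⟨?_, ?_, ?_⟩
  · rw [div_lt_iff₀ hD, zero_mul, neg_lt_zero]
    exact mul_pos_iff_of_pos_left hc
  · rw [lt_div_iff₀ hD, zero_mul, neg_pos]
    constructor
    · intro h; nlinarith
    · intro h; nlinarith
  · rw [div_eq_zero_iff]
    simp [hD', hc.ne']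

/-- SEIR model with asymptomatic stage: for every u > 0 the difference
R₀(u) − R₀(0), given by the displayed rational expression, has the same sign as the
u-coefficient R₁; hence if the numerator bracket is positive then
R₀(u) < R₀(0) for all u > 0. -/
theorem stmt14 (η γA γI γT μ x αA αI p₁ p₂ : ℝ)
    (hη : 0 < η) (hγA : 0 < γA) (hγI : 0 < γI) (hγT : 0 < γT) (hμ : 0 < μ)
    (hx : 0 < x) (hαA : 0 ≤ αA) (hαI : 0 ≤ αI)
    (hp₁ : 0 < p₁) (hp₁' : p₁ ≤ 1) (hp₂ : 0 ≤ p₂) (hp₂' : p₂ ≤ 1)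
    (R₁ : ℝ)
    (hR₁ : R₁ = -(η * p₁ * (αI * (γA + μ) * (γT + μ) +
        (αI * (γA + μ) - αA * (γI + μ)) * (1 - p₂) * x)) /
        ((η + μ) * (γA + μ) * (γI + μ) ^ 2 * (γT + μ + x)))
    (diff : ℝ → ℝ)
    (hdiff : ∀ u, diff u = -(η * p₁ * u * (αI * (γA + μ) * (γT + μ) +
        (αI * (γA + μ) - αA * (γI + μ)) * (1 - p₂) * x)) /
        ((η + μ) * (γA + μ) * (γI + μ) *
          ((γI + μ) * (γT + μ + x) + (γT + μ + x * (1 - p₂)) * u))) :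
    (∀ u, 0 < u → ((diff u < 0 ↔ R₁ < 0) ∧ (0 < diff u ↔ 0 < R₁) ∧
        (diff u = 0 ↔ R₁ = 0))) ∧
      (0 < αI * (γA + μ) * (γT + μ) + (αI * (γA + μ) - αA * (γI + μ)) * (1 - p₂) * x →
        ∀ u, 0 < u → diff u < 0) := by
  set N := αI * (γA + μ) * (γT + μ) + (αI * (γA + μ) - αA * (γI + μ)) * (1 - p₂) * x with hN
  have hD1 : 0 < (η + μ) * (γA + μ) * (γI + μ) ^ 2 * (γT + μ + x) := by positivity
  have hR1aux := sign_aux (η * p₁) _ N (by positivity) hD1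
  have hR1eq : R₁ = -(η * p₁ * N) / ((η + μ) * (γA + μ) * (γI + μ) ^ 2 * (γT + μ + x)) := hR₁
  have key : ∀ u, 0 < u → ((diff u < 0 ↔ 0 < N) ∧ (0 < diff u ↔ N < 0) ∧
      (diff u = 0 ↔ N = 0)) := by
    intro u hu
    have hD2 : 0 < (η + μ) * (γA + μ) * (γI + μ) *
        ((γI + μ) * (γT + μ + x) + (γT + μ + x * (1 - p₂)) * u) := by
      have h1 : 0 ≤ x * (1 - p₂) := mul_nonneg hx.le (by linarith)
      have h2 : 0 < (γI + μ) * (γT + μ + x) + (γT + μ + x * (1 - p₂)) * u := by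
        nlinarith
      positivity
    have := sign_aux (η * p₁ * u) _ N (by positivity) hD2
    rw [hdiff u]
    exact this
  constructor
  · intro u hu
    obtain ⟨k1, k2, k3⟩ := key u hu
    obtain ⟨r1, r2, r3⟩ := hR1aux
    rw [← hR1eq] at r1 r2 r3
    exact ⟨k1.trans r1.symm, k2.trans r2.symm, k3.trans r3.symm⟩
  · intro hNpos u hu
    exact ((key u hu).1).mpr hNpos
end
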